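/- Let H be a quasi-Turaev π-coalgebra, α, β ∈ π, and (V, ρ_V) an α-Yetter–Drinfeld module. Then ^βV — the k-space V with elements written ^βv, H_{βαβ⁻¹}-action h · ^βv = ^β(φ_{β⁻¹}(h) · v), and coaction ρ_{^βV,λ}(^βv) = ^β(v_{(0,0)}) ⊗ φ_β(v_{(1,β⁻¹λβ)}) for λ ∈ π, where v_{(0,0)} ⊗ v_{(1,β⁻¹λβ)} = ρ_{V,β⁻¹λβ}(v) — is a (βαβ⁻¹)-Yetter–Drinfeld module over H. -/

import Mathlib

open scoped TensorProduct
open TensorProduct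

universe u v
set_option maxHeartbeats 1000000

section QH
variable (k : Type u) [Field k] {π : Type v} [Group π]
variable (H : π → Type u) [∀ a, Ring (H a)] [∀ a, Algebra k (H a)]

/-- Transport along equality of group elements, as a `k`-linear map. -/
def castL {a b : π} (e : a = b) : H a →ₗ[k] H b := by subst e; exact LinearMap.id

/-- Transport along equality of group elements, as a `k`-algebra map. -/
def castA {a b : π} (e : a = b) : H a →ₐ[k] H b := by subst e; exact AlgHom.id k _

/-- A quasi-Hopf `π`-coalgebra (quasi-Turaev group coalgebra without the crossing):
a family of `k`-algebras `{H α}` with comultiplications `Δ_{α,β}`, counit `ε`,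
invertible associators `Φ_{α,β,γ}`, antipodes `S_α` and elements `p_α, q_α`. -/
structure QuasiHopfGCoalgebra where
  /-- comultiplication -/
  Δ : ∀ a b : π, H (a * b) →ₐ[k] (H a ⊗[k] H b)
  /-- counit -/
  ε : H 1 →ₐ[k] k
  /-- the associator `Φ_{α,β,γ} ∈ H_α ⊗ H_β ⊗ H_γ` -/
  Φ : ∀ a b c : π, H a ⊗[k] (H b ⊗[k] H c)
  /-- the inverse associator -/
  Φinv : ∀ a b c : π, H a ⊗[k] (H b ⊗[k] H c)
  Φ_mul_Φinv : ∀ a b c : π, Φ a b c * Φinv a b c = 1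
  Φinv_mul_Φ : ∀ a b c : π, Φinv a b c * Φ a b c = 1
  /-- the antipode, a family of bijective `k`-linear maps -/
  S : ∀ a : π, H a ≃ₗ[k] H a⁻¹
  S_one : ∀ a : π, S a 1 = 1
  /-- the antipode is anti-multiplicative -/
  S_mul : ∀ (a : π) (x y : H a), S a (x * y) = S a y * S a x
  p : ∀ a : π, H a
  q : ∀ a : π, H a
  /-- quasi-coassociativity:
  `(id ⊗ Δ_{β,γ})Δ_{α,βγ}(h) ⬝ Φ_{α,β,γ} = Φ_{α,β,γ} ⬝ (Δ_{α,β} ⊗ id)Δ_{αβ,γ}(h)` -/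
  coassoc : ∀ (a b c : π) (h : H (a * b * c)),
    (TensorProduct.map LinearMap.id (Δ b c).toLinearMap)
        ((Δ a (b * c)) (castL k H (mul_assoc a b c) h)) * Φ a b c
      = Φ a b c *
        (TensorProduct.assoc k (H a) (H b) (H c))
          ((TensorProduct.map (Δ a b).toLinearMap LinearMap.id) ((Δ (a * b) c) h))
  /-- right counit law `(id ⊗ ε)Δ_{α,1} = id` -/
  counit_right : ∀ (a : π) (h : H a),
    (TensorProduct.rid k (H a))
      ((TensorProduct.map LinearMap.id (ε : H 1 →ₗ[k] k))
        ((Δ a 1) (castL k H (mul_one a).symm h))) = h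
  /-- left counit law `(ε ⊗ id)Δ_{1,α} = id` -/
  counit_left : ∀ (a : π) (h : H a),
    (TensorProduct.lid k (H a))
      ((TensorProduct.map (ε : H 1 →ₗ[k] k) LinearMap.id)
        ((Δ 1 a) (castL k H (one_mul a).symm h))) = h
  /-- the pentagon identity -/
  pentagon : ∀ a b c d : π,
    ((1 : H a) ⊗ₜ[k] Φ b c d) *
      (TensorProduct.map LinearMap.id
          ((TensorProduct.assoc k (H b) (H c) (H d)).toLinearMap ∘ₗ
            TensorProduct.map (Δ b c).toLinearMap LinearMap.id)
        (Φ a (b * c) d)) *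
      ((TensorProduct.map LinearMap.id (TensorProduct.assoc k (H b) (H c) (H d)).toLinearMap)
        ((TensorProduct.assoc k (H a) (H b ⊗[k] H c) (H d)) ((Φ a b c) ⊗ₜ[k] (1 : H d))))
    = (TensorProduct.map LinearMap.id
          (TensorProduct.map LinearMap.id (Δ c d).toLinearMap) (Φ a b (c * d))) *
      ((TensorProduct.assoc k (H a) (H b) (H c ⊗[k] H d))
        ((TensorProduct.map (Δ a b).toLinearMap LinearMap.id) (Φ (a * b) c d)))
  /-- normalization `(id ⊗ ε ⊗ id)(Φ_{α,1,β}) = 1 ⊗ 1` -/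
  Φ_normal : ∀ a b : π,
    (TensorProduct.map LinearMap.id
      ((TensorProduct.lid k (H b)).toLinearMap ∘ₗ
        TensorProduct.map (ε : H 1 →ₗ[k] k) LinearMap.id) (Φ a 1 b)) = (1 : H a ⊗[k] H b)
  /-- `S_α(h₁) p_{α⁻¹} h₂ = ε(h) p_{α⁻¹}` for `h ∈ H_1` -/
  antipode_p : ∀ (a : π) (h : H 1),
    (LinearMap.mul' k (H a⁻¹) ∘ₗ
        TensorProduct.map (LinearMap.mulRight k (p a⁻¹) ∘ₗ (S a).toLinearMap) LinearMap.id)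
      ((Δ a a⁻¹) (castL k H (mul_inv_cancel a).symm h)) = ε h • p a⁻¹
  /-- `h₁ q_α S_{α⁻¹}(h₂) = ε(h) q_α` for `h ∈ H_1` -/
  antipode_q : ∀ (a : π) (h : H 1),
    (LinearMap.mul' k (H a) ∘ₗ
        TensorProduct.map (LinearMap.mulRight k (q a))
          (castL k H (inv_inv a) ∘ₗ (S a⁻¹).toLinearMap))
      ((Δ a a⁻¹) (castL k H (mul_inv_cancel a).symm h)) = ε h • q a
  /-- `Y¹_α q_α S_{α⁻¹}(Y²_{α⁻¹}) p_α Y³_α = 1_α` where `Φ_{α,α⁻¹,α} = Y¹ ⊗ Y² ⊗ Y³` -/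
  antipode_Φ : ∀ a : π,
    (LinearMap.mul' k (H a) ∘ₗ
      TensorProduct.map (LinearMap.mulRight k (q a))
        (LinearMap.mul' k (H a) ∘ₗ
          TensorProduct.map
            (LinearMap.mulRight k (p a) ∘ₗ castL k H (inv_inv a) ∘ₗ (S a⁻¹).toLinearMap)
            LinearMap.id))
      (Φ a a⁻¹ a) = 1
  /-- `S_{α⁻¹}(y¹_{α⁻¹}) p_α y²_α q_α S_{α⁻¹}(y³_{α⁻¹}) = 1_α`
  where `Φ⁻¹_{α⁻¹,α,α⁻¹} = y¹ ⊗ y² ⊗ y³` -/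
  antipode_Φinv : ∀ a : π,
    (LinearMap.mul' k (H a) ∘ₗ
      TensorProduct.map
        (LinearMap.mulRight k (p a) ∘ₗ castL k H (inv_inv a) ∘ₗ (S a⁻¹).toLinearMap)
        (LinearMap.mul' k (H a) ∘ₗ
          TensorProduct.map (LinearMap.mulRight k (q a))
            (castL k H (inv_inv a) ∘ₗ (S a⁻¹).toLinearMap)))
      (Φinv a⁻¹ a a⁻¹) = 1

namespace QuasiHopfGCoalgebra
variable {k H}
variable (T : QuasiHopfGCoalgebra k H)

/-- `I^R_{α,β} = y¹_α ⊗ y²_β q_β S_{β⁻¹}(y³_{β⁻¹})` where `Φ⁻¹_{α,β,β⁻¹} = y¹ ⊗ y² ⊗ y³` -/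
noncomputable def IR (a b : π) : H a ⊗[k] H b :=
  TensorProduct.map LinearMap.id
    (LinearMap.mul' k (H b) ∘ₗ
      TensorProduct.map (LinearMap.mulRight k (T.q b))
        (castL k H (inv_inv b) ∘ₗ (T.S b⁻¹).toLinearMap))
    (T.Φinv a b b⁻¹)

/-- `J^R_{α,β} = Y¹_α ⊗ S_β⁻¹(p_{β⁻¹} Y³_{β⁻¹}) Y²_β` where `Φ_{α,β,β⁻¹} = Y¹ ⊗ Y² ⊗ Y³` -/
noncomputable def JR (a b : π) : H a ⊗[k] H b :=
  TensorProduct.map LinearMap.id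
    (LinearMap.mul' k (H b) ∘ₗ
      TensorProduct.map ((T.S b).symm.toLinearMap ∘ₗ LinearMap.mulLeft k (T.p b⁻¹))
          LinearMap.id ∘ₗ
        (TensorProduct.comm k (H b) (H b⁻¹)).toLinearMap)
    (T.Φ a b b⁻¹)

/-- `I^L_{α,β} = Y²_α S_α⁻¹(Y¹_{α⁻¹} q_{α⁻¹}) ⊗ Y³_β` where `Φ_{α⁻¹,α,β} = Y¹ ⊗ Y² ⊗ Y³` -/
noncomputable def IL (a b : π) : H a ⊗[k] H b :=
  TensorProduct.map (LinearMap.mul' k (H a)) LinearMap.id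
    ((TensorProduct.assoc k (H a) (H a) (H b)).symm
      ((TensorProduct.leftComm k (H a) (H a) (H b))
        (TensorProduct.map ((T.S a).symm.toLinearMap ∘ₗ LinearMap.mulRight k (T.q a⁻¹))
          LinearMap.id (T.Φ a⁻¹ a b))))

/-- `J^L_{α,β} = S_{α⁻¹}(y¹_{α⁻¹}) p_α y²_α ⊗ y³_β` where `Φ⁻¹_{α⁻¹,α,β} = y¹ ⊗ y² ⊗ y³` -/
noncomputable def JL (a b : π) : H a ⊗[k] H b :=
  TensorProduct.map (LinearMap.mul' k (H a)) LinearMap.id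
    ((TensorProduct.assoc k (H a) (H a) (H b)).symm
      (TensorProduct.map
        (LinearMap.mulRight k (T.p a) ∘ₗ castL k H (inv_inv a) ∘ₗ (T.S a⁻¹).toLinearMap)
        LinearMap.id (T.Φinv a⁻¹ a b)))

/-- the map `x ⊗ y ↦ Δ_{α,β}(x) ⬝ I^R_{α,β} ⬝ (1_α ⊗ S_{β⁻¹}(y))` -/
noncomputable def lmapIR (a b : π) : (H (a * b) ⊗[k] H b⁻¹) →ₗ[k] (H a ⊗[k] H b) :=
  LinearMap.mul' k (H a ⊗[k] H b) ∘ₗ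
    TensorProduct.map
      (LinearMap.mulRight k (T.IR a b) ∘ₗ (T.Δ a b).toLinearMap)
      (TensorProduct.mk k (H a) (H b) 1 ∘ₗ castL k H (inv_inv b) ∘ₗ (T.S b⁻¹).toLinearMap)

/-- the map `x ⊗ y ↦ (1_α ⊗ S_β⁻¹(y)) ⬝ J^R_{α,β} ⬝ Δ_{α,β}(x)` -/
noncomputable def lmapJR (a b : π) : (H (a * b) ⊗[k] H b⁻¹) →ₗ[k] (H a ⊗[k] H b) :=
  LinearMap.mul' k (H a ⊗[k] H b) ∘ₗ
    TensorProduct.map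
      (TensorProduct.mk k (H a) (H b) 1 ∘ₗ (T.S b).symm.toLinearMap)
      (LinearMap.mulLeft k (T.JR a b) ∘ₗ (T.Δ a b).toLinearMap) ∘ₗ
    (TensorProduct.comm k (H (a * b)) (H b⁻¹)).toLinearMap

/-- the map `x ⊗ y ↦ Δ_{α,β}(y) ⬝ I^L_{α,β} ⬝ (S_α⁻¹(x) ⊗ 1_β)` -/
noncomputable def lmapIL (a b : π) : (H a⁻¹ ⊗[k] H (a * b)) →ₗ[k] (H a ⊗[k] H b) :=
  LinearMap.mul' k (H a ⊗[k] H b) ∘ₗ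
    TensorProduct.map
      (LinearMap.mulRight k (T.IL a b) ∘ₗ (T.Δ a b).toLinearMap)
      ((TensorProduct.mk k (H a) (H b)).flip 1 ∘ₗ (T.S a).symm.toLinearMap) ∘ₗ
    (TensorProduct.comm k (H a⁻¹) (H (a * b))).toLinearMap

/-- the map `x ⊗ y ↦ (S_{α⁻¹}(x) ⊗ 1_β) ⬝ J^L_{α,β} ⬝ Δ_{α,β}(y)` -/
noncomputable def lmapJL (a b : π) : (H a⁻¹ ⊗[k] H (a * b)) →ₗ[k] (H a ⊗[k] H b) :=
  LinearMap.mul' k (H a ⊗[k] H b) ∘ₗ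
    TensorProduct.map
      ((TensorProduct.mk k (H a) (H b)).flip 1 ∘ₗ
        castL k H (inv_inv a) ∘ₗ (T.S a⁻¹).toLinearMap)
      (LinearMap.mulLeft k (T.JL a b) ∘ₗ (T.Δ a b).toLinearMap)

end QuasiHopfGCoalgebra

/-- A quasi-Turaev `π`-coalgebra: a quasi-Hopf `π`-coalgebra together with a crossing
`φ_β : H_α → H_{βαβ⁻¹}`. -/
structure QuasiTuraevGCoalgebra extends QuasiHopfGCoalgebra k H where
  /-- the crossing -/
  φ : ∀ b a : π, H a ≃ₐ[k] H (b * a * b⁻¹)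
  /-- the crossing preserves the comultiplication -/
  φ_comul : ∀ (b a c : π) (h : H (a * c)),
    TensorProduct.map (φ b a).toLinearMap (φ b c).toLinearMap ((Δ a c) h)
      = (Δ (b * a * b⁻¹) (b * c * b⁻¹))
          (castL k H (by group) ((φ b (a * c)) h))
  /-- the crossing preserves the counit -/
  φ_counit : ∀ (b : π) (h : H 1),
    ε (castL k H (by group : b * 1 * b⁻¹ = 1) ((φ b 1) h)) = ε h
  /-- the crossing is multiplicative -/
  φ_mul : ∀ (b b' a : π) (h : H a),
    castL k H (by group : b * (b' * a * b'⁻¹) * b⁻¹ = (b * b') * a * (b * b')⁻¹)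
        ((φ b (b' * a * b'⁻¹)) ((φ b' a) h))
      = (φ (b * b') a) h
  /-- the associator is invariant under the crossing -/
  φ_Φ : ∀ e t v a b c : π,
    TensorProduct.map (φ e a).toLinearMap
        (TensorProduct.map (φ t b).toLinearMap (φ v c).toLinearMap) (Φ a b c)
      = Φ (e * a * e⁻¹) (t * b * t⁻¹) (v * c * v⁻¹)

end QH

section PMapComb
/- Combinators for "parameterized linear maps" `A →ₗ[k] (M →ₗ[k] N)`: these let us build
multilinear expressions compositionally. -/
variable {k : Type u} [Field k]
variable {A B M N M' N' P Q : Type u}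
variable [AddCommGroup A] [Module k A] [AddCommGroup B] [Module k B]
variable [AddCommGroup M] [Module k M] [AddCommGroup N] [Module k N]
variable [AddCommGroup M'] [Module k M'] [AddCommGroup N'] [Module k N']
variable [AddCommGroup P] [Module k P] [AddCommGroup Q] [Module k Q]

/-- tensor product of parameterized maps -/
noncomputable def pmapTens (f : A →ₗ[k] M →ₗ[k] N) (g : B →ₗ[k] M' →ₗ[k] N') :
    (A ⊗[k] B) →ₗ[k] (M ⊗[k] M') →ₗ[k] (N ⊗[k] N') :=
  TensorProduct.homTensorHomMap (RingHom.id k) M M' N N' ∘ₗ TensorProduct.map f g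

/-- composition of parameterized maps: `(pcomp f g) (a ⊗ b) = g b ∘ₗ f a` -/
noncomputable def pcomp (f : A →ₗ[k] M →ₗ[k] N) (g : B →ₗ[k] N →ₗ[k] P) :
    (A ⊗[k] B) →ₗ[k] M →ₗ[k] P :=
  TensorProduct.lift
    ((LinearMap.lcomp k (M →ₗ[k] P) g) ∘ₗ (LinearMap.llcomp k M N P).flip ∘ₗ f)

/-- postcompose a parameterized map with a fixed map -/
noncomputable def ppost (h : N →ₗ[k] P) (f : A →ₗ[k] M →ₗ[k] N) : A →ₗ[k] M →ₗ[k] P :=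
  (LinearMap.llcomp k M N P h) ∘ₗ f

/-- precompose a parameterized map with a fixed map -/
noncomputable def ppre (h : P →ₗ[k] M) (f : A →ₗ[k] M →ₗ[k] N) : A →ₗ[k] P →ₗ[k] N :=
  (LinearMap.lcomp k N h) ∘ₗ f

/-- reparameterize -/
noncomputable def pparam (σ : B →ₗ[k] A) (f : A →ₗ[k] M →ₗ[k] N) : B →ₗ[k] M →ₗ[k] N :=
  f ∘ₗ σ

/-- act on the left tensor factor -/
noncomputable def pleft (P : Type u) [AddCommGroup P] [Module k P]
    (f : A →ₗ[k] M →ₗ[k] N) : A →ₗ[k] (M ⊗[k] P) →ₗ[k] (N ⊗[k] P) :=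
  (LinearMap.rTensorHom P) ∘ₗ f

/-- act on the right tensor factor -/
noncomputable def pright (P : Type u) [AddCommGroup P] [Module k P]
    (f : A →ₗ[k] M →ₗ[k] N) : A →ₗ[k] (P ⊗[k] M) →ₗ[k] (P ⊗[k] N) :=
  (LinearMap.lTensorHom P) ∘ₗ f

end PMapComb

section Modules
variable {k : Type u} [Field k] {π : Type v} [Group π]
variable {H : π → Type u} [∀ a, Ring (H a)] [∀ a, Algebra k (H a)]
variable (T : QuasiTuraevGCoalgebra k H)

namespace QuasiTuraevGCoalgebra

/-- The `H_{αβ}`-module structure on the tensor product of an `H_α`-module and an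
`H_β`-module, through `Δ_{α,β}`. -/
noncomputable def tensAlg {a b : π} {M N : Type u}
    [AddCommGroup M] [Module k M] [AddCommGroup N] [Module k N]
    (ρ : H a →ₐ[k] Module.End k M) (σ : H b →ₐ[k] Module.End k N) :
    H (a * b) →ₐ[k] Module.End k (M ⊗[k] N) :=
  ((Module.endTensorEndAlgHom (R := k) (S := k) (A := k) (M := M) (N := N)).comp
      (Algebra.TensorProduct.map ρ σ)).comp (T.Δ a b)

/-- The conjugate module `^βX`: `X` with the `H_{βαβ⁻¹}`-action `h · x = φ_{β⁻¹}(h) · x`. -/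
noncomputable def conjAlg {a : π} {X : Type u} [AddCommGroup X] [Module k X]
    (ρ : H a →ₐ[k] Module.End k X) (b : π) :
    H (b * a * b⁻¹) →ₐ[k] Module.End k X :=
  (ρ.comp (castA k H (by group : b⁻¹ * (b * a * b⁻¹) * b⁻¹⁻¹ = a))).comp
    (T.φ b⁻¹ (b * a * b⁻¹)).toAlgHom

/-- Evaluation of an action: `H_α ⊗ X → X`. -/
noncomputable def aev {a : π} {X : Type u} [AddCommGroup X] [Module k X]
    (ρ : H a →ₐ[k] Module.End k X) : (H a ⊗[k] X) →ₗ[k] X :=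
  TensorProduct.lift ρ.toLinearMap

/-- The associativity constraint of `Rep(H)`: multiplication by `Φ_{α,β,γ}` composed with
the canonical vector space isomorphism. -/
noncomputable def assocMod {a b c : π} {M₁ M₂ M₃ : Type u}
    [AddCommGroup M₁] [Module k M₁] [AddCommGroup M₂] [Module k M₂]
    [AddCommGroup M₃] [Module k M₃]
    (ρ₁ : H a →ₐ[k] Module.End k M₁) (ρ₂ : H b →ₐ[k] Module.End k M₂)
    (ρ₃ : H c →ₐ[k] Module.End k M₃) :
    ((M₁ ⊗[k] M₂) ⊗[k] M₃) →ₗ[k] (M₁ ⊗[k] (M₂ ⊗[k] M₃)) :=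
  (pmapTens ρ₁.toLinearMap (pmapTens ρ₂.toLinearMap ρ₃.toLinearMap) (T.Φ a b c)) ∘ₗ
    (TensorProduct.assoc k M₁ M₂ M₃).toLinearMap

/-- The inverse associativity constraint of `Rep(H)`. -/
noncomputable def assocModInv {a b c : π} {M₁ M₂ M₃ : Type u}
    [AddCommGroup M₁] [Module k M₁] [AddCommGroup M₂] [Module k M₂]
    [AddCommGroup M₃] [Module k M₃]
    (ρ₁ : H a →ₐ[k] Module.End k M₁) (ρ₂ : H b →ₐ[k] Module.End k M₂)
    (ρ₃ : H c →ₐ[k] Module.End k M₃) :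
    (M₁ ⊗[k] (M₂ ⊗[k] M₃)) →ₗ[k] ((M₁ ⊗[k] M₂) ⊗[k] M₃) :=
  (TensorProduct.assoc k M₁ M₂ M₃).symm.toLinearMap ∘ₗ
    (pmapTens ρ₁.toLinearMap (pmapTens ρ₂.toLinearMap ρ₃.toLinearMap) (T.Φinv a b c))

end QuasiTuraevGCoalgebra
end Modules

section YD
variable {k : Type u} [Field k] {π : Type v} [Group π]
variable {H : π → Type u} [∀ a, Ring (H a)] [∀ a, Algebra k (H a)]

namespace QuasiTuraevGCoalgebra
variable (T : QuasiTuraevGCoalgebra k H)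
variable {a : π} {V : Type u} [AddCommGroup V] [Module k V]

/-- Counitarity `(id ⊗ ε) ∘ ρ_{V,1} = id` of a coaction family. -/
def ydCounitProp (coact : ∀ l : π, V →ₗ[k] V ⊗[k] H l) : Prop :=
  ∀ v : V,
    (TensorProduct.rid k V)
      ((TensorProduct.map LinearMap.id (T.ε : H 1 →ₗ[k] k)) (coact 1 v)) = v

/-- The left-hand side of the Yetter-Drinfeld quasi-coassociativity axiom, as a linear map:
`v ↦ (y²_α·v₍₀,₀₎)₍₀,₀₎ ⊗ ((y²_α·v₍₀,₀₎)₍₁,λ₁₎ y¹_{λ₁} ⊗ y³_{λ₂} v₍₁,λ₂₎)`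
where `y¹ ⊗ y² ⊗ y³ = Φ⁻¹_{λ₁,α,λ₂}`. -/
noncomputable def ydCoassocLHS (ρ : H a →ₐ[k] Module.End k V)
    (coact : ∀ l : π, V →ₗ[k] V ⊗[k] H l) (l₁ l₂ : π) :
    V →ₗ[k] V ⊗[k] (H l₁ ⊗[k] H l₂) :=
  (TensorProduct.assoc k V (H l₁) (H l₂)).toLinearMap ∘ₗ
    ((pparam
        ((TensorProduct.assoc k (H a) (H l₁) (H l₂)).symm.toLinearMap ∘ₗ
          (TensorProduct.leftComm k (H l₁) (H a) (H l₂)).toLinearMap)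
        (pmapTens
          (pcomp ((LinearMap.llcomp k V V (V ⊗[k] H l₁) (coact l₁)) ∘ₗ ρ.toLinearMap)
            (pright V ((LinearMap.mul k (H l₁)).flip)))
          (LinearMap.mul k (H l₂))))
      (T.Φinv l₁ a l₂)) ∘ₗ
    coact l₂

/-- The right-hand side of the Yetter-Drinfeld quasi-coassociativity axiom, as a linear map:
`v ↦ Φ⁻¹_{α,λ₁,λ₂} ⬝ [(ȳ³_α·v)₍₀,₀₎ ⊗ ((ȳ³_α·v)₍₁,λ₁λ₂₎₍₁,λ₁₎ ȳ¹_{λ₁} ⊗ (ȳ³_α·v)₍₁,λ₁λ₂₎₍₂,λ₂₎ ȳ²_{λ₂})]`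
where `ȳ¹ ⊗ ȳ² ⊗ ȳ³ = Φ⁻¹_{λ₁,λ₂,α}`. -/
noncomputable def ydCoassocRHS (ρ : H a →ₐ[k] Module.End k V)
    (coact : ∀ l : π, V →ₗ[k] V ⊗[k] H l) (l₁ l₂ : π) :
    V →ₗ[k] V ⊗[k] (H l₁ ⊗[k] H l₂) :=
  ((pmapTens ρ.toLinearMap
      (pmapTens (Algebra.lmul k (H l₁)).toLinearMap (Algebra.lmul k (H l₂)).toLinearMap))
    (T.Φinv a l₁ l₂)) ∘ₗ
  ((pparam
      ((LinearMap.lTensor (H a) (TensorProduct.comm k (H l₂) (H l₁)).toLinearMap) ∘ₗ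
        (TensorProduct.leftComm k (H l₂) (H a) (H l₁)).toLinearMap ∘ₗ
        (TensorProduct.assoc k (H l₂) (H a) (H l₁)).toLinearMap ∘ₗ
        (TensorProduct.comm k (H l₁) (H l₂ ⊗[k] H a)).toLinearMap)
      (pcomp
        ((LinearMap.llcomp k V V (V ⊗[k] (H l₁ ⊗[k] H l₂))
            ((LinearMap.lTensor V (T.Δ l₁ l₂).toLinearMap) ∘ₗ coact (l₁ * l₂))) ∘ₗ
          ρ.toLinearMap)
        (pright V
          (pmapTens ((LinearMap.mul k (H l₁)).flip) ((LinearMap.mul k (H l₂)).flip)))))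
    (T.Φinv l₁ l₂ a))

/-- The Yetter-Drinfeld quasi-coassociativity axiom. -/
def ydCoassocProp (ρ : H a →ₐ[k] Module.End k V)
    (coact : ∀ l : π, V →ₗ[k] V ⊗[k] H l) : Prop :=
  ∀ l₁ l₂ : π, ydCoassocLHS T ρ coact l₁ l₂ = ydCoassocRHS T ρ coact l₁ l₂

/-- The right-hand side of the Yetter-Drinfeld compatibility axiom, as a map parameterized
by `Δ_{αβα⁻¹,α}(h)`: `(h₁ ⊗ h₂) ↦ (v ↦ (h₂·v)₍₀,₀₎ ⊗ (h₂·v)₍₁,β₎ φ_{α⁻¹}(h₁))`. -/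
noncomputable def ydCompatRHS (ρ : H a →ₐ[k] Module.End k V)
    {b : π} (coactb : V →ₗ[k] V ⊗[k] H b) :
    (H (a * b * a⁻¹) ⊗[k] H a) →ₗ[k] V →ₗ[k] V ⊗[k] H b :=
  pparam (TensorProduct.comm k (H (a * b * a⁻¹)) (H a)).toLinearMap
    (pcomp ((LinearMap.llcomp k V V (V ⊗[k] H b) coactb) ∘ₗ ρ.toLinearMap)
      (pright V
        ((LinearMap.mul k (H b)).flip ∘ₗ
          castL k H (by group : a⁻¹ * (a * b * a⁻¹) * a⁻¹⁻¹ = b) ∘ₗ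
          (T.φ a⁻¹ (a * b * a⁻¹)).toLinearMap)))

/-- The Yetter-Drinfeld compatibility axiom:
`h₍₁,α₎·v₍₀,₀₎ ⊗ h₍₂,β₎ v₍₁,β₎ = (h₍₂,α₎·v)₍₀,₀₎ ⊗ (h₍₂,α₎·v)₍₁,β₎ φ_{α⁻¹}(h₍₁,αβα⁻¹₎)`. -/
def ydCompatProp (ρ : H a →ₐ[k] Module.End k V)
    (coact : ∀ l : π, V →ₗ[k] V ⊗[k] H l) : Prop :=
  ∀ (b : π) (h : H (a * b)) (v : V),
    (T.tensAlg ρ (Algebra.lmul k (H b))) h (coact b v)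
      = (ydCompatRHS T ρ (coact b))
          ((T.Δ (a * b * a⁻¹) a)
            (castA k H (by group : a * b = a * b * a⁻¹ * a) h)) v

/-- `V` is an `α`-Yetter-Drinfeld module over `T` (relative to the `H_α`-action `ρ` and
the coaction family `coact`). -/
def IsYD (ρ : H a →ₐ[k] Module.End k V)
    (coact : ∀ l : π, V →ₗ[k] V ⊗[k] H l) : Prop :=
  ydCounitProp T coact ∧ ydCoassocProp T ρ coact ∧ ydCompatProp T ρ coact

end QuasiTuraevGCoalgebra
end YD

section Braid
variable {k : Type u} [Field k] {π : Type v} [Group π]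
variable {H : π → Type u} [∀ a, Ring (H a)] [∀ a, Algebra k (H a)]

namespace QuasiTuraevGCoalgebra
variable (T : QuasiTuraevGCoalgebra k H)
variable {a : π} {V : Type u} [AddCommGroup V] [Module k V]

/-- For an `α`-Yetter-Drinfeld module `V` and a left `H_λ`-module `X`, the map
`ĉ_{V,X} : ^αX ⊗ V → V ⊗ X`, `x ⊗ v ↦ v₍₀,₀₎ ⊗ v₍₁,λ₎ · x`. -/
noncomputable def ydBraidInv {l : π} {X : Type u} [AddCommGroup X] [Module k X]
    (coact : ∀ l : π, V →ₗ[k] V ⊗[k] H l) (ρX : H l →ₐ[k] Module.End k X) :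
    (X ⊗[k] V) →ₗ[k] (V ⊗[k] X) :=
  (LinearMap.lTensor V (aev ρX)) ∘ₗ
    (TensorProduct.assoc k V (H l) X).toLinearMap ∘ₗ
    (LinearMap.rTensor X (coact l)) ∘ₗ
    (TensorProduct.comm k X V).toLinearMap

/-- For an `α`-Yetter-Drinfeld module `V` and a left `H_λ`-module `X`, the map
`c_{V,X} : V ⊗ X → ^αX ⊗ V` given by
`v ⊗ x ↦ ^α[J¹₍₁,λ₎ y¹_λ S_{λ⁻¹}(J²_{λ⁻¹} y³_{λ⁻¹} (Ĩ²_α·v)₍₁,λ⁻¹₎ Ĩ¹_{λ⁻¹}) · x]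
⊗ J¹₍₂,α₎ y²_α · (Ĩ²_α·v)₍₀,₀₎`, where `Ĩ¹ ⊗ Ĩ² = I^L_{λ⁻¹,α}`,
`J¹ ⊗ J² = J^R_{λα,λ⁻¹}` and `y¹ ⊗ y² ⊗ y³ = Φ⁻¹_{λ,α,λ⁻¹}`. -/
noncomputable def ydBraid {l : π} {X : Type u} [AddCommGroup X] [Module k X]
    (ρV : H a →ₐ[k] Module.End k V) (coact : ∀ l : π, V →ₗ[k] V ⊗[k] H l)
    (ρX : H l →ₐ[k] Module.End k X) :
    (V ⊗[k] X) →ₗ[k] (X ⊗[k] V) :=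
  ((pparam (TensorProduct.leftComm k (H l) (H a) (H l⁻¹)).toLinearMap
      (ppost (TensorProduct.comm k V X).toLinearMap
        (pmapTens ρV.toLinearMap
          (ppost (aev ρX)
            (pleft X
              (pparam (TensorProduct.comm k (H l) (H l⁻¹)).toLinearMap
                (pcomp
                  (ppost (castL k H (inv_inv l) ∘ₗ (T.S l⁻¹).toLinearMap)
                    (LinearMap.mul k (H l⁻¹)))
                  (LinearMap.mul k (H l)))))))))
    (((TensorProduct.assoc k (H l) (H a) (H l⁻¹)).toLinearMap
        ((LinearMap.rTensor (H l⁻¹) (T.Δ l a).toLinearMap) (T.JR (l * a) l⁻¹))) *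
      T.Φinv l a l⁻¹)) ∘ₗ
  (TensorProduct.assoc k V (H l⁻¹) X).toLinearMap ∘ₗ
  (LinearMap.rTensor X
    ((pparam (TensorProduct.comm k (H l⁻¹) (H a)).toLinearMap
        (pcomp ((LinearMap.llcomp k V V (V ⊗[k] H l⁻¹) (coact l⁻¹)) ∘ₗ ρV.toLinearMap)
          (pright V ((LinearMap.mul k (H l⁻¹)).flip))))
      (T.IL l⁻¹ a)))

/-- The coaction of the conjugate Yetter-Drinfeld module `^βV`:
`ρ_{^βV,λ}(v) = v₍₀,₀₎ ⊗ φ_β(v₍₁,β⁻¹λβ₎)`. -/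
noncomputable def conjCoact (coact : ∀ l : π, V →ₗ[k] V ⊗[k] H l) (b : π) :
    ∀ l : π, V →ₗ[k] V ⊗[k] H l :=
  fun l =>
    (LinearMap.lTensor V
      (castL k H (by group : b * (b⁻¹ * l * b) * b⁻¹ = l) ∘ₗ
        (T.φ b (b⁻¹ * l * b)).toLinearMap)) ∘ₗ
    coact (b⁻¹ * l * b)

variable {b : π} {W : Type u} [AddCommGroup W] [Module k W]

/-- The coaction of the tensor product of an `α`-Yetter-Drinfeld module `V` and a
`β`-Yetter-Drinfeld module `W`:
`ρ_{V⊗W,λ}(v ⊗ w) = t¹_α Y¹_α · (y²_α·v)₍₀,₀₎ ⊗ t²_β · (Y³_β y³_β·w)₍₀,₀₎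
  ⊗ t³_λ (Y³_β y³_β·w)₍₁,λ₎ Y²_λ φ_{β⁻¹}((y²_α·v)₍₁,βλβ⁻¹₎) y¹_λ`
where `t = Φ⁻¹_{α,β,λ}`, `Y = Φ_{α,λ,β}` and `y = Φ⁻¹_{λ,α,β}`. -/
noncomputable def ydTensorCoact (ρV : H a →ₐ[k] Module.End k V)
    (coactV : ∀ l : π, V →ₗ[k] V ⊗[k] H l)
    (ρW : H b →ₐ[k] Module.End k W)
    (coactW : ∀ l : π, W →ₗ[k] W ⊗[k] H l) (l : π) :
    (V ⊗[k] W) →ₗ[k] (V ⊗[k] W) ⊗[k] H l :=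
  (TensorProduct.assoc k V W (H l)).symm.toLinearMap ∘ₗ
  -- stage `t = Φ⁻¹_{α,β,λ}` : `t¹` acts on `V`, `t²` acts on `W`, `t³` multiplies on the left
  ((pmapTens ρV.toLinearMap (pmapTens ρW.toLinearMap (LinearMap.mul k (H l))))
    (T.Φinv a b l)) ∘ₗ
  -- stage `Y = Φ_{α,λ,β}` : `Y¹` acts on `V`; `Y²` multiplies on the left; then `Y³` acts
  -- on `W`, the coaction `ρ_{W,λ}` is applied, and `(…·w)₍₁,λ₎` multiplies on the left
  ((pmapTens ρV.toLinearMap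
      (pcomp (pright W (LinearMap.mul k (H l)))
        (ppost
          ((LinearMap.lTensor W (LinearMap.mul' k (H l))) ∘ₗ
            (TensorProduct.assoc k W (H l) (H l)).toLinearMap)
          (pleft (H l)
            ((LinearMap.llcomp k W W (W ⊗[k] H l) (coactW l)) ∘ₗ ρW.toLinearMap)))))
    (T.Φ a l b)) ∘ₗ
  -- stage `y = Φ⁻¹_{λ,α,β}` : `y²` acts on `V` followed by `ρ_{V,βλβ⁻¹}`, whose second leg
  -- is pushed through `φ_{β⁻¹}` and multiplied on the left of `y¹`; `y³` acts on `W`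
  ((pparam
      ((LinearMap.lTensor (H a) (TensorProduct.comm k (H l) (H b)).toLinearMap) ∘ₗ
        (TensorProduct.leftComm k (H l) (H a) (H b)).toLinearMap)
      (ppost
        ((LinearMap.lTensor V (LinearMap.lTensor W (LinearMap.mul' k (H l)))) ∘ₗ
          (LinearMap.lTensor V (TensorProduct.leftComm k (H l) W (H l)).toLinearMap) ∘ₗ
          (TensorProduct.assoc k V (H l) (W ⊗[k] H l)).toLinearMap ∘ₗ
          (LinearMap.rTensor (W ⊗[k] H l)
            (LinearMap.lTensor V
              (castL k H (by group : b⁻¹ * (b * l * b⁻¹) * b⁻¹⁻¹ = l) ∘ₗ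
                (T.φ b⁻¹ (b * l * b⁻¹)).toLinearMap))))
        (pmapTens
          ((LinearMap.llcomp k V V (V ⊗[k] H (b * l * b⁻¹)) (coactV (b * l * b⁻¹))) ∘ₗ
            ρV.toLinearMap)
          (ppre (TensorProduct.rid k W).symm.toLinearMap
            (pmapTens ρW.toLinearMap
              ((LinearMap.ringLmapEquivSelf k k (H l)).symm.toLinearMap))))))
    (T.Φinv l a b))

end QuasiTuraevGCoalgebra
end Braid

section HB
variable {k : Type u} [Field k] {π : Type v} [Group π]
variable {H : π → Type u} [∀ a, Ring (H a)] [∀ a, Algebra k (H a)]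
variable (T : QuasiTuraevGCoalgebra k H)

open QuasiTuraevGCoalgebra

/-- A half-braiding on a left `H_α`-module `V`: a natural family of `H_{αλ}`-linear
isomorphisms `c_{V,X} : V ⊗ X → ^αX ⊗ V` satisfying the hexagon identity. A pair
`(V, c_{V,-})` is an object of the `α`-th component `Z_α(Rep(H))` of the center of
`Rep(H)`. -/
structure HalfBraiding (a : π) (V : Type u) [AddCommGroup V] [Module k V]
    (ρV : H a →ₐ[k] Module.End k V) where
  /-- the underlying `k`-linear isomorphisms `c_{V,X}` -/
  braid : ∀ (l : π) (X : Type u) [AddCommGroup X] [Module k X]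
    (ρX : H l →ₐ[k] Module.End k X), (V ⊗[k] X) ≃ₗ[k] (X ⊗[k] V)
  /-- `c_{V,X}` is `H_{αλ}`-linear -/
  hlinear : ∀ (l : π) (X : Type u) [AddCommGroup X] [Module k X]
    (ρX : H l →ₐ[k] Module.End k X) (h : H (a * l)) (t : V ⊗[k] X),
    braid l X ρX ((T.tensAlg ρV ρX h) t)
      = (T.tensAlg (T.conjAlg ρX a) ρV
          (castA k H (by group : a * l = a * l * a⁻¹ * a) h)) (braid l X ρX t)
  /-- `c_{V,-}` is natural -/
  hnatural : ∀ (l : π) (X X' : Type u) [AddCommGroup X] [Module k X]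
    [AddCommGroup X'] [Module k X']
    (ρX : H l →ₐ[k] Module.End k X) (ρX' : H l →ₐ[k] Module.End k X')
    (g : X →ₗ[k] X'), (∀ (h : H l) (x : X), g (ρX h x) = ρX' h (g x)) →
    ∀ t : V ⊗[k] X,
      braid l X' ρX' ((LinearMap.lTensor V g) t)
        = (LinearMap.rTensor V g) (braid l X ρX t)
  /-- the hexagon identity
  `c_{V,X₁⊗X₂} = a⁻¹_{^αX₁,^αX₂,V} ∘ (id ⊗ c_{V,X₂}) ∘ a_{^αX₁,V,X₂} ∘ (c_{V,X₁} ⊗ id) ∘ a⁻¹_{V,X₁,X₂}` -/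
  hhexagon : ∀ (l₁ l₂ : π) (X₁ X₂ : Type u) [AddCommGroup X₁] [Module k X₁]
    [AddCommGroup X₂] [Module k X₂]
    (ρ₁ : H l₁ →ₐ[k] Module.End k X₁) (ρ₂ : H l₂ →ₐ[k] Module.End k X₂),
    (braid (l₁ * l₂) (X₁ ⊗[k] X₂) (T.tensAlg ρ₁ ρ₂)).toLinearMap
      = T.assocModInv (T.conjAlg ρ₁ a) (T.conjAlg ρ₂ a) ρV ∘ₗ
        LinearMap.lTensor X₁ (braid l₂ X₂ ρ₂).toLinearMap ∘ₗ
        T.assocMod (T.conjAlg ρ₁ a) ρV ρ₂ ∘ₗ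
        LinearMap.rTensor X₂ (braid l₁ X₁ ρ₁).toLinearMap ∘ₗ
        T.assocModInv ρV ρ₁ ρ₂

end HB

section HB2
variable {k : Type u} [Field k] {π : Type v} [Group π]
variable {H : π → Type u} [∀ a, Ring (H a)] [∀ a, Algebra k (H a)]
variable {T : QuasiTuraevGCoalgebra k H}

/-- The coaction induced by a half-braiding: `ρ_{V,λ}(v) = c⁻¹_{V,H_λ}(^α1_λ ⊗ v)`. -/
noncomputable def HalfBraiding.coactOf {a : π} {V : Type u} [AddCommGroup V] [Module k V]
    {ρV : H a →ₐ[k] Module.End k V} (hb : HalfBraiding T a V ρV) :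
    ∀ l : π, V →ₗ[k] V ⊗[k] H l :=
  fun l =>
    (hb.braid l (H l) (Algebra.lmul k (H l))).symm.toLinearMap ∘ₗ
      TensorProduct.mk k (H l) V 1

end HB2

/-!
The crossing `φ_β` is an algebra isomorphism `H_x ≅ H_{βxβ⁻¹}` commuting with `Δ`, `ε` and `Φ`,
hence also with `Φ⁻¹`. Consequently each side of each Yetter–Drinfeld axiom for `^βV` at the
indices `λ, λ₁, λ₂` is the image under `id_V ⊗ φ_β` of the same side for `V` at the conjugate
indices `β⁻¹λβ, …`: wherever the action of `^βV` meets a leg of `φ_β(Φ⁻¹)` or of `φ_β(Δ(h))`,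
it undoes the crossing because `φ_{β⁻¹} φ_β = id`. For the compatibility axiom one also uses
that `φ_β` is surjective and that `φ_{(βαβ⁻¹)⁻¹} φ_β = φ_β φ_{α⁻¹}`.
-/

section Cast
variable {k : Type u} [Field k] {π : Type v}
variable {H : π → Type u} [∀ a, Ring (H a)] [∀ a, Algebra k (H a)]

@[simp] theorem castL_rfl {a : π} : castL k H (rfl : a = a) = LinearMap.id := rfl

@[simp] theorem castA_rfl_apply {a : π} (x : H a) : castA k H (rfl : a = a) x = x := rfl

theorem castL_castL {a b c : π} (e : a = b) (f : b = c) (x : H a) :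
    castL k H f (castL k H e x) = castL k H (e.trans f) x := by subst e; subst f; rfl

theorem castL_apply_eq_castA {a b : π} (e : a = b) (x : H a) :
    castL k H e x = castA k H e x := by subst e; rfl

theorem lTensor_castL_coact {V : Type u} [AddCommGroup V] [Module k V]
    (coact : ∀ l : π, V →ₗ[k] V ⊗[k] H l) {x y : π} (ex : x = y) (v : V) :
    LinearMap.lTensor V (castL k H ex) (coact x v) = coact y v := by
  subst ex; simp

end Cast

theorem conj_conj_inv {π : Type v} [Group π] (b l : π) : b * (b⁻¹ * l * b) * b⁻¹ = l := by
  group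

namespace QuasiTuraevGCoalgebra
variable {k : Type u} [Field k] {π : Type v} [Group π]
variable {H : π → Type u} [∀ a, Ring (H a)] [∀ a, Algebra k (H a)]
variable (T : QuasiTuraevGCoalgebra k H)

noncomputable def cross (g : π) {x y : π} (e : g * x * g⁻¹ = y) : H x →ₐ[k] H y :=
  (castA k H e).comp (T.φ g x).toAlgHom

theorem cross_apply (g : π) {x y : π} (e : g * x * g⁻¹ = y) (h : H x) :
    T.cross g e h = castA k H e (T.φ g x h) := rfl

theorem cross_toLinearMap (g : π) {x y : π} (e : g * x * g⁻¹ = y) :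
    (T.cross g e).toLinearMap = castL k H e ∘ₗ (T.φ g x).toLinearMap :=
  LinearMap.ext fun _ => (castL_apply_eq_castA e _).symm

theorem cross_rfl_toLinearMap (g x : π) :
    (T.cross g (rfl : g * x * g⁻¹ = _)).toLinearMap = (T.φ g x).toLinearMap := by
  rw [cross_toLinearMap, castL_rfl, LinearMap.id_comp]

theorem cross_injective (g : π) {x y : π} (e : g * x * g⁻¹ = y) :
    Function.Injective (T.cross g e) := by
  subst e
  exact (T.φ g x).injective

theorem cross_congr {g g' : π} (hg : g = g') {x y : π} (e : g * x * g⁻¹ = y)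
    (e' : g' * x * g'⁻¹ = y) (h : H x) : T.cross g e h = T.cross g' e' h := by
  subst hg; rfl

theorem castA_cross {g x y z : π} (f : y = z) (e : g * x * g⁻¹ = y) (h : H x) :
    castA k H f (T.cross g e h) = T.cross g (e.trans f) h := by subst f; rfl

theorem cross_castA {g w x y : π} (f : w = x) (e : g * x * g⁻¹ = y) (e' : g * w * g⁻¹ = y)
    (h : H w) : T.cross g e (castA k H f h) = T.cross g e' h := by subst f; rfl

theorem cross_cross (g g' : π) {x y z : π} (e' : g' * x * g'⁻¹ = y) (e : g * y * g⁻¹ = z)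
    (e'' : (g * g') * x * (g * g')⁻¹ = z) (h : H x) :
    T.cross g e (T.cross g' e' h) = T.cross (g * g') e'' h := by
  subst e'; subst e
  rw [cross_apply, cross_apply, cross_apply, castA_rfl_apply, castA_rfl_apply,
    ← T.φ_mul g g' x h, ← castL_apply_eq_castA, castL_castL]
  rfl

theorem cross_one {x : π} (e : (1 : π) * x * (1 : π)⁻¹ = x) (h : H x) :
    T.cross 1 e h = h := by
  apply T.cross_injective 1 e
  calc T.cross 1 e (T.cross 1 e h)
      = T.cross ((1 : π) * 1) (by group) h := T.cross_cross 1 1 e e _ h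
    _ = T.cross 1 e h := T.cross_congr (mul_one 1) _ e h

theorem cross_surjective (g : π) {x y : π} (e : g * x * g⁻¹ = y) :
    Function.Surjective (T.cross g e) := fun h =>
  ⟨T.cross g⁻¹ (by rw [← e]; group : g⁻¹ * y * g⁻¹⁻¹ = x) h, by
    rw [T.cross_cross g g⁻¹ _ e (by group),
      T.cross_congr (mul_inv_cancel g) _ (by group : (1 : π) * y * (1 : π)⁻¹ = y), T.cross_one]⟩

theorem cross_inv_cross (g : π) {x y z : π} (e : g * x * g⁻¹ = y) (e' : g⁻¹ * y * g⁻¹⁻¹ = z)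
    (hxz : x = z) (h : H x) :
    T.cross g⁻¹ e' (T.cross g e h) = castA k H hxz h := by
  subst hxz
  rw [T.cross_cross g⁻¹ g e e' (by group),
    T.cross_congr (inv_mul_cancel g) _ (by group : (1 : π) * x * (1 : π)⁻¹ = x), T.cross_one,
    castA_rfl_apply]

theorem map_cross_comul (g : π) {x₁ x₂ y₁ y₂ : π} (e₁ : g * x₁ * g⁻¹ = y₁)
    (e₂ : g * x₂ * g⁻¹ = y₂) (e₃ : g * (x₁ * x₂) * g⁻¹ = y₁ * y₂) (h : H (x₁ * x₂)) :
    TensorProduct.map (T.cross g e₁).toLinearMap (T.cross g e₂).toLinearMap (T.Δ x₁ x₂ h)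
      = T.Δ y₁ y₂ (T.cross g e₃ h) := by
  subst e₁; subst e₂
  rw [cross_rfl_toLinearMap, cross_rfl_toLinearMap, T.φ_comul g x₁ x₂ h,
    castL_apply_eq_castA]
  rfl

theorem counit_cross (g : π) {x : π} (ex : x = 1) (e : g * x * g⁻¹ = 1) (h : H x) :
    T.ε (T.cross g e h) = T.ε (castA k H ex h) := by
  subst ex
  rw [castA_rfl_apply, cross_apply, ← castL_apply_eq_castA]
  exact T.φ_counit g h

theorem map_cross_Φ (g : π) {x₁ x₂ x₃ y₁ y₂ y₃ : π} (e₁ : g * x₁ * g⁻¹ = y₁)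
    (e₂ : g * x₂ * g⁻¹ = y₂) (e₃ : g * x₃ * g⁻¹ = y₃) :
    TensorProduct.map (T.cross g e₁).toLinearMap
      (TensorProduct.map (T.cross g e₂).toLinearMap (T.cross g e₃).toLinearMap)
      (T.Φ x₁ x₂ x₃) = T.Φ y₁ y₂ y₃ := by
  subst e₁; subst e₂; subst e₃
  simp only [cross_rfl_toLinearMap]
  exact T.φ_Φ g g g x₁ x₂ x₃

theorem map_cross_Φinv (g : π) {x₁ x₂ x₃ y₁ y₂ y₃ : π} (e₁ : g * x₁ * g⁻¹ = y₁)
    (e₂ : g * x₂ * g⁻¹ = y₂) (e₃ : g * x₃ * g⁻¹ = y₃) :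
    TensorProduct.map (T.cross g e₁).toLinearMap
      (TensorProduct.map (T.cross g e₂).toLinearMap (T.cross g e₃).toLinearMap)
      (T.Φinv x₁ x₂ x₃) = T.Φinv y₁ y₂ y₃ := by
  -- an algebra map sends the inverse of `Φ` to the inverse of its image
  let F := Algebra.TensorProduct.map (T.cross g e₁)
    (Algebra.TensorProduct.map (T.cross g e₂) (T.cross g e₃))
  have hFΦ : F (T.Φ x₁ x₂ x₃) = T.Φ y₁ y₂ y₃ := T.map_cross_Φ g e₁ e₂ e₃
  have hright : T.Φ y₁ y₂ y₃ * F (T.Φinv x₁ x₂ x₃) = 1 := by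
    rw [← hFΦ, ← map_mul, T.Φ_mul_Φinv, map_one]
  exact (left_inv_eq_right_inv (T.Φinv_mul_Φ y₁ y₂ y₃) hright).symm

end QuasiTuraevGCoalgebra

section PMapLemmas
variable {k : Type u} [Field k]
variable {A B M N M' N' P : Type u}
variable [AddCommGroup A] [Module k A] [AddCommGroup B] [Module k B]
variable [AddCommGroup M] [Module k M] [AddCommGroup N] [Module k N]
variable [AddCommGroup M'] [Module k M'] [AddCommGroup N'] [Module k N']
variable [AddCommGroup P] [Module k P]

@[simp] theorem pmapTens_tmul (f : A →ₗ[k] M →ₗ[k] N) (g : B →ₗ[k] M' →ₗ[k] N')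
    (a : A) (b : B) :
    pmapTens f g (a ⊗ₜ[k] b) = TensorProduct.map (f a) (g b) := by
  simp [pmapTens]

@[simp] theorem pcomp_tmul (f : A →ₗ[k] M →ₗ[k] N) (g : B →ₗ[k] N →ₗ[k] P)
    (a : A) (b : B) :
    pcomp f g (a ⊗ₜ[k] b) = g b ∘ₗ f a := rfl

@[simp] theorem pparam_apply (σ : B →ₗ[k] A) (f : A →ₗ[k] M →ₗ[k] N) (b : B) :
    pparam σ f b = f (σ b) := rfl

@[simp] theorem pright_apply (f : A →ₗ[k] M →ₗ[k] N) (a : A) :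
    pright P f a = LinearMap.lTensor P (f a) := rfl

end PMapLemmas

namespace QuasiTuraevGCoalgebra
variable {k : Type u} [Field k] {π : Type v} [Group π]
variable {H : π → Type u} [∀ a, Ring (H a)] [∀ a, Algebra k (H a)]
variable (T : QuasiTuraevGCoalgebra k H)
variable {a : π} {V : Type u} [AddCommGroup V] [Module k V]

theorem tensAlg_apply {b : π} {M N : Type u}
    [AddCommGroup M] [Module k M] [AddCommGroup N] [Module k N]
    (ρ : H a →ₐ[k] Module.End k M) (σ : H b →ₐ[k] Module.End k N) (h : H (a * b)) :
    T.tensAlg ρ σ h = pmapTens ρ.toLinearMap σ.toLinearMap (T.Δ a b h) := by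
  change Module.endTensorEndAlgHom (Algebra.TensorProduct.map ρ σ (T.Δ a b h)) = _
  induction T.Δ a b h using TensorProduct.induction_on with
  | zero => simp
  | tmul x y => exact TensorProduct.ext' fun _ _ => rfl
  | add u v hu hv => simp only [map_add, hu, hv]

theorem conjAlg_cross (ρ : H a →ₐ[k] Module.End k V) (b : π) (z : H a) :
    T.conjAlg ρ b (T.cross b (rfl : b * a * b⁻¹ = _) z) = ρ z := by
  change ρ (T.cross b⁻¹ _ (T.cross b rfl z)) = ρ z
  rw [T.cross_inv_cross b rfl _ rfl z, castA_rfl_apply]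

variable (coact : ∀ l : π, V →ₗ[k] V ⊗[k] H l)

theorem conjCoact_eq (b l : π) :
    T.conjCoact coact b l
      = LinearMap.lTensor V (T.cross b (conj_conj_inv b l)).toLinearMap ∘ₗ
        coact (b⁻¹ * l * b) := by
  rw [conjCoact, cross_toLinearMap]

theorem lTensor_cross_coact_congr (g : π) {x y z : π} (exy : x = y) (e : g * x * g⁻¹ = z)
    (e' : g * y * g⁻¹ = z) (v : V) :
    LinearMap.lTensor V (T.cross g e).toLinearMap (coact x v)
      = LinearMap.lTensor V (T.cross g e').toLinearMap (coact y v) := by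
  subst exy; rfl

theorem ydCounitProp_conj (hcounit : T.ydCounitProp coact) (b : π) :
    T.ydCounitProp (T.conjCoact coact b) := by
  intro v
  have e : b⁻¹ * 1 * b = 1 := by group
  have hε : (T.ε : H 1 →ₗ[k] k) ∘ₗ (T.cross b (conj_conj_inv b 1)).toLinearMap
      = (T.ε : H 1 →ₗ[k] k) ∘ₗ castL k H e :=
    LinearMap.ext fun x => by
      simp only [LinearMap.comp_apply, AlgHom.toLinearMap_apply, castL_apply_eq_castA]
      exact T.counit_cross b e _ x
  rw [T.conjCoact_eq, LinearMap.comp_apply, LinearMap.map_lTensor, hε,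
    ← LinearMap.map_lTensor, lTensor_castL_coact]
  exact hcounit v

theorem ydCoassocLHS_conj (ρ : H a →ₐ[k] Module.End k V) (b l₁ l₂ : π) :
    ydCoassocLHS T (T.conjAlg ρ b) (T.conjCoact coact b) l₁ l₂
      = LinearMap.lTensor V
          (TensorProduct.map (T.cross b (conj_conj_inv b l₁)).toLinearMap
            (T.cross b (conj_conj_inv b l₂)).toLinearMap) ∘ₗ
        ydCoassocLHS T ρ coact (b⁻¹ * l₁ * b) (b⁻¹ * l₂ * b) := by
  ext v
  simp only [ydCoassocLHS, LinearMap.coe_comp, Function.comp_apply, LinearEquiv.coe_coe,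
    T.conjCoact_eq coact b]
  rw [← T.map_cross_Φinv b (conj_conj_inv b l₁) rfl (conj_conj_inv b l₂)]
  induction T.Φinv (b⁻¹ * l₁ * b) a (b⁻¹ * l₂ * b) using TensorProduct.induction_on with
  | zero => simp
  | add u w hu hw => simp only [map_add, LinearMap.add_apply, hu, hw]
  | tmul z₁ Z =>
    induction Z using TensorProduct.induction_on with
    | zero => simp
    | add u w hu hw => simp only [map_add, TensorProduct.tmul_add, LinearMap.add_apply, hu, hw]
    | tmul z₂ z₃ =>
      induction coact (b⁻¹ * l₂ * b) v using TensorProduct.induction_on with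
      | zero => simp
      | add u w hu hw => simp only [map_add, hu, hw]
      | tmul v₀ w =>
        simp only [pmapTens_tmul, pcomp_tmul, pparam_apply, pright_apply,
          TensorProduct.map_tmul, LinearMap.lTensor_tmul, TensorProduct.assoc_symm_tmul,
          TensorProduct.leftComm_tmul, LinearMap.mul_apply', LinearMap.llcomp_apply,
          LinearMap.coe_comp, Function.comp_apply, AlgHom.toLinearMap_apply, LinearEquiv.coe_coe]
        rw [T.conjAlg_cross ρ b z₂]
        induction coact (b⁻¹ * l₁ * b) (ρ z₂ v₀) using TensorProduct.induction_on with
        | zero => simp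
        | add u w hu hw => simp only [map_add, TensorProduct.add_tmul, hu, hw]
        | tmul s₀ s₁ =>
          simp only [LinearMap.lTensor_tmul, TensorProduct.map_tmul, TensorProduct.assoc_tmul,
            LinearMap.mul_apply', LinearMap.flip_apply, AlgHom.toLinearMap_apply, map_mul]

theorem pmapTens_Φinv_comp_lTensor_cross (ρ : H a →ₐ[k] Module.End k V) (b : π)
    {x₁ x₂ y₁ y₂ : π} (e₁ : b * x₁ * b⁻¹ = y₁) (e₂ : b * x₂ * b⁻¹ = y₂) :
    pmapTens (T.conjAlg ρ b).toLinearMap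
        (pmapTens (Algebra.lmul k (H y₁)).toLinearMap (Algebra.lmul k (H y₂)).toLinearMap)
        (T.Φinv (b * a * b⁻¹) y₁ y₂) ∘ₗ
      LinearMap.lTensor V
        (TensorProduct.map (T.cross b e₁).toLinearMap (T.cross b e₂).toLinearMap)
    = LinearMap.lTensor V
        (TensorProduct.map (T.cross b e₁).toLinearMap (T.cross b e₂).toLinearMap) ∘ₗ
      pmapTens ρ.toLinearMap
        (pmapTens (Algebra.lmul k (H x₁)).toLinearMap (Algebra.lmul k (H x₂)).toLinearMap)
        (T.Φinv a x₁ x₂) := by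
  rw [← T.map_cross_Φinv b rfl e₁ e₂]
  induction T.Φinv a x₁ x₂ using TensorProduct.induction_on with
  | zero => simp
  | add u w hu hw => simp only [map_add, LinearMap.add_comp, LinearMap.comp_add, hu, hw]
  | tmul t₁ t =>
    induction t using TensorProduct.induction_on with
    | zero => simp
    | add u w hu hw =>
      simp only [map_add, TensorProduct.tmul_add, LinearMap.add_comp, LinearMap.comp_add, hu, hw]
    | tmul t₂ t₃ =>
      ext v h₁ h₂
      simp [conjAlg_cross]

theorem ydCoassocRHS_conj (ρ : H a →ₐ[k] Module.End k V) (b l₁ l₂ : π) :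
    ydCoassocRHS T (T.conjAlg ρ b) (T.conjCoact coact b) l₁ l₂
      = LinearMap.lTensor V
          (TensorProduct.map (T.cross b (conj_conj_inv b l₁)).toLinearMap
            (T.cross b (conj_conj_inv b l₂)).toLinearMap) ∘ₗ
        ydCoassocRHS T ρ coact (b⁻¹ * l₁ * b) (b⁻¹ * l₂ * b) := by
  have e₁₂ : b * ((b⁻¹ * l₁ * b) * (b⁻¹ * l₂ * b)) * b⁻¹ = l₁ * l₂ := by group
  ext v
  simp only [ydCoassocRHS, LinearMap.comp_apply]
  rw [← LinearMap.comp_apply (LinearMap.lTensor V _),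
    ← T.pmapTens_Φinv_comp_lTensor_cross ρ b (conj_conj_inv b l₁) (conj_conj_inv b l₂),
    LinearMap.comp_apply]
  congr 1
  simp only [T.conjCoact_eq coact b]
  rw [← T.map_cross_Φinv b (conj_conj_inv b l₁) (conj_conj_inv b l₂) rfl]
  induction T.Φinv (b⁻¹ * l₁ * b) (b⁻¹ * l₂ * b) a using TensorProduct.induction_on with
  | zero => simp
  | add u w hu hw => simp only [map_add, LinearMap.add_apply, hu, hw]
  | tmul y₁ y =>
    induction y using TensorProduct.induction_on with
    | zero => simp
    | add u w hu hw => simp only [map_add, TensorProduct.tmul_add, LinearMap.add_apply, hu, hw]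
    | tmul y₂ y₃ =>
      simp only [pmapTens_tmul, pcomp_tmul, pparam_apply, pright_apply,
        TensorProduct.map_tmul, LinearMap.lTensor_tmul, TensorProduct.assoc_tmul,
        TensorProduct.leftComm_tmul, TensorProduct.comm_tmul, LinearMap.llcomp_apply,
        LinearMap.coe_comp, Function.comp_apply, AlgHom.toLinearMap_apply, LinearEquiv.coe_coe]
      rw [T.conjAlg_cross ρ b y₃, T.lTensor_cross_coact_congr coact b
        (show b⁻¹ * (l₁ * l₂) * b = (b⁻¹ * l₁ * b) * (b⁻¹ * l₂ * b) by group) _ e₁₂]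
      induction coact ((b⁻¹ * l₁ * b) * (b⁻¹ * l₂ * b)) (ρ y₃ v)
          using TensorProduct.induction_on with
      | zero => simp
      | add u w hu hw => simp only [map_add, hu, hw]
      | tmul v₀ w =>
        simp only [LinearMap.lTensor_tmul, AlgHom.toLinearMap_apply]
        rw [← T.map_cross_comul b (conj_conj_inv b l₁) (conj_conj_inv b l₂) e₁₂ w]
        induction T.Δ (b⁻¹ * l₁ * b) (b⁻¹ * l₂ * b) w using TensorProduct.induction_on with
        | zero => simp
        | add u w hu hw => simp only [map_add, TensorProduct.tmul_add, hu, hw]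
        | tmul d₁ d₂ => simp [map_mul]

theorem ydCoassocProp_conj (ρ : H a →ₐ[k] Module.End k V) (hcoassoc : T.ydCoassocProp ρ coact)
    (b : π) : T.ydCoassocProp (T.conjAlg ρ b) (T.conjCoact coact b) := fun l₁ l₂ => by
  rw [ydCoassocLHS_conj, ydCoassocRHS_conj, hcoassoc]

theorem tensAlg_conj_cross_comp_lTensor (ρ : H a →ₐ[k] Module.End k V) (b : π) {x y : π}
    (e : b * x * b⁻¹ = y) (e' : b * (a * x) * b⁻¹ = b * a * b⁻¹ * y) (h : H (a * x)) :
    T.tensAlg (T.conjAlg ρ b) (Algebra.lmul k (H y)) (T.cross b e' h) ∘ₗ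
        LinearMap.lTensor V (T.cross b e).toLinearMap
      = LinearMap.lTensor V (T.cross b e).toLinearMap ∘ₗ
        T.tensAlg ρ (Algebra.lmul k (H x)) h := by
  rw [tensAlg_apply, tensAlg_apply, ← T.map_cross_comul b rfl e e']
  induction T.Δ a x h using TensorProduct.induction_on with
  | zero => simp
  | add u w hu hw => simp only [map_add, LinearMap.add_comp, LinearMap.comp_add, hu, hw]
  | tmul d₁ d₂ =>
    ext v z
    simp [conjAlg_cross]

theorem ydCompatRHS_conj (ρ : H a →ₐ[k] Module.End k V) (b : π) {x y : π}
    (e : b * x * b⁻¹ = y) (e' : b * (a * x * a⁻¹) * b⁻¹ = b * a * b⁻¹ * y * (b * a * b⁻¹)⁻¹)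
    (c : V →ₗ[k] V ⊗[k] H x) (D : H (a * x * a⁻¹) ⊗[k] H a) :
    ydCompatRHS T (T.conjAlg ρ b) (LinearMap.lTensor V (T.cross b e).toLinearMap ∘ₗ c)
        (TensorProduct.map (T.cross b e').toLinearMap (T.cross b rfl).toLinearMap D)
      = LinearMap.lTensor V (T.cross b e).toLinearMap ∘ₗ ydCompatRHS T ρ c D := by
  -- `φ_{(βαβ⁻¹)⁻¹} ∘ φ_β = φ_β ∘ φ_{α⁻¹}`, both being `φ_{βα⁻¹}`
  have hcross : ∀ d : H (a * x * a⁻¹),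
      T.cross (b * a * b⁻¹)⁻¹ (by group : (b * a * b⁻¹)⁻¹ * (b * a * b⁻¹ * y * (b * a * b⁻¹)⁻¹) *
          (b * a * b⁻¹)⁻¹⁻¹ = y) (T.cross b e' d)
        = T.cross b e (T.cross a⁻¹ (by group : a⁻¹ * (a * x * a⁻¹) * a⁻¹⁻¹ = x) d) := by
    intro d
    rw [T.cross_cross _ b e' _ (by rw [← e]; group),
      T.cross_cross b a⁻¹ _ e (by rw [← e]; group)]
    exact T.cross_congr (by group) _ _ d
  induction D using TensorProduct.induction_on with
  | zero => simp
  | add u w hu hw => simp only [map_add, LinearMap.comp_add, hu, hw]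
  | tmul d₁ d₂ =>
    ext v
    simp only [ydCompatRHS, pparam_apply, pcomp_tmul, pright_apply, TensorProduct.map_tmul,
      TensorProduct.comm_tmul, LinearMap.comp_apply, LinearMap.llcomp_apply,
      AlgHom.toLinearMap_apply, LinearEquiv.coe_coe, ← cross_toLinearMap]
    rw [T.conjAlg_cross]
    induction c (ρ d₂ v) using TensorProduct.induction_on with
    | zero => simp
    | add u w hu hw => simp only [map_add, hu, hw]
    | tmul v₀ z =>
      simp only [LinearMap.lTensor_tmul, LinearMap.flip_apply, LinearMap.mul_apply',
        AlgHom.toLinearMap_apply, map_mul, hcross]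

theorem ydCompatProp_conj (ρ : H a →ₐ[k] Module.End k V) (hcompat : T.ydCompatProp ρ coact)
    (b : π) : T.ydCompatProp (T.conjAlg ρ b) (T.conjCoact coact b) := by
  intro y h v
  have e₀ : b * (a * (b⁻¹ * y * b)) * b⁻¹ = b * a * b⁻¹ * y := by group
  have e₁ : b * (a * (b⁻¹ * y * b) * a⁻¹) * b⁻¹
      = b * a * b⁻¹ * y * (b * a * b⁻¹)⁻¹ := by group
  have e₂ : b * (a * (b⁻¹ * y * b) * a⁻¹ * a) * b⁻¹
      = b * a * b⁻¹ * y * (b * a * b⁻¹)⁻¹ * (b * a * b⁻¹) := by group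
  obtain ⟨h, rfl⟩ := T.cross_surjective b e₀ h
  rw [T.conjCoact_eq, ← LinearMap.comp_apply (T.tensAlg _ _ _), ← LinearMap.comp_assoc,
    T.tensAlg_conj_cross_comp_lTensor ρ b (conj_conj_inv b y) e₀ h, LinearMap.comp_assoc,
    LinearMap.comp_apply, LinearMap.comp_apply, hcompat,
    ← LinearMap.comp_apply (LinearMap.lTensor V _), ← T.ydCompatRHS_conj ρ b (conj_conj_inv b y) e₁, T.map_cross_comul b e₁ rfl e₂,
    T.cross_castA, T.castA_cross]

end QuasiTuraevGCoalgebra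

section Statements
variable {k : Type u} [Field k] {π : Type v} [Group π]
variable {H : π → Type u} [∀ a, Ring (H a)] [∀ a, Algebra k (H a)]
open QuasiTuraevGCoalgebra

/-- The conjugate `^βV` of an `α`-Yetter-Drinfeld module, with action
`h · v = φ_{β⁻¹}(h) · v` and coaction `ρ_{^βV,λ}(v) = v₍₀,₀₎ ⊗ φ_β(v₍₁,β⁻¹λβ₎)`, is a
`βαβ⁻¹`-Yetter-Drinfeld module. -/
theorem stmt17 (T : QuasiTuraevGCoalgebra k H) {a : π} {V : Type u}
    [AddCommGroup V] [Module k V]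
    (ρV : H a →ₐ[k] Module.End k V) (coactV : ∀ l : π, V →ₗ[k] V ⊗[k] H l)
    (hV : T.IsYD ρV coactV) (b : π) :
    T.IsYD (T.conjAlg ρV b) (T.conjCoact coactV b) :=
  ⟨T.ydCounitProp_conj coactV hV.1 b, T.ydCoassocProp_conj coactV ρV hV.2.1 b,
    T.ydCompatProp_conj coactV ρV hV.2.2 b⟩

end Statements
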